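/- Assume m is odd and l′ is even (case (iv)). Then the set Δ_{s^{−1}} = {α ∈ Δ₊ : s^{−1}α ∈ Δ₋} consists exactly of the following roots: the roots α_{2t−1} + α_{2t} + α_{2t+1} for 1 ≤ t ≤ (m−1)/2; the roots α_m + α_{m+1} + ⋯ + α_{m+q} for 1 ≤ q ≤ p; the root γ′ = α_m + ⋯ + α_{m+p+2}; the roots α_i + α_{i+1} + ⋯ + α_{m+p+2} for m+2 ≤ i ≤ m+p+2; the roots α_{m+p+2t} + α_{m+p+2t+1} + α_{m+p+2t+2} for 1 ≤ t ≤ (m−1)/2; the root α_{m+p+m+1} + α_{m+p+m+2}; and the simple roots α_1, α_3, …, α_m and α_{m+p+2}, α_{m+p+4}, …, α_{m+p+m+1}. -/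

import Mathlib

/- Common framework: type A_l root system realized in ℝ^{ℕ} (coordinates 1,…,l+1 used),
   the Weyl group as permutations of ℕ acting by permuting coordinates, and the
   Weyl group element s = s₁s₂ of Proposition 4.2 (all four parity cases). -/

noncomputable section

namespace DPW

/-- The ambient vector space (only coordinates 1,…,l+1 are used). -/
abbrev V : Type := ℕ → ℝ

/-- Standard basis vector e_i. -/
def evec (i : ℕ) : V := fun j => if j = i then 1 else 0

/-- The root e_i − e_j. -/
def rt (i j : ℕ) : V := evec i - evec j

/-- The root system Δ of type A_l. -/
def Delta (l : ℕ) : Set V :=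
  {v | ∃ i j, 1 ≤ i ∧ i ≤ l + 1 ∧ 1 ≤ j ∧ j ≤ l + 1 ∧ i ≠ j ∧ v = rt i j}

/-- Positive roots Δ₊. -/
def DeltaPos (l : ℕ) : Set V :=
  {v | ∃ i j, 1 ≤ i ∧ i < j ∧ j ≤ l + 1 ∧ v = rt i j}

/-- Negative roots Δ₋ = −Δ₊. -/
def DeltaNeg (l : ℕ) : Set V := {v | -v ∈ DeltaPos l}

/-- Action of a permutation on V : (σ·v)_j = v_{σ⁻¹(j)}. -/
def pact (σ : Equiv.Perm ℕ) (v : V) : V := fun j => v (σ⁻¹ j)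

/-- row(e_a − e_b) = a. -/
def rowOf (v : V) : ℕ := sInf {a | v a = 1}

/-- col(e_a − e_b) = b. -/
def colOf (v : V) : ℕ := sInf {b | v b = (-1 : ℝ)}

/-- Product of the simple reflections s_{α_i} = (i, i+1) for i in a list. -/
def swapProd (idxs : List ℕ) : Equiv.Perm ℕ :=
  (idxs.map (fun i => Equiv.swap i (i + 1))).prod

/-- The Weyl group element s = s₁s₂ (cases (i)–(iv) according to the parities of
    m = ⌊(l′−1)/2⌋ and l′; here p = l − l′ and s_γ = (m+1, m+p+2)). -/
def weylS (l l' : ℕ) : Equiv.Perm ℕ :=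
  let m := (l' - 1) / 2
  let p := l - l'
  if m % 2 = 0 then
    if l' % 2 = 1 then
      -- case (i)
      (swapProd (List.range' 2 (m / 2) 2) * swapProd (List.range' (m + p + 2) (m / 2) 2)) *
        (swapProd (List.range' 1 (m / 2) 2) * Equiv.swap (m + 1) (m + p + 2) *
          swapProd (List.range' (m + p + 3) (m / 2) 2))
    else
      -- case (ii)
      (swapProd (List.range' 2 (m / 2) 2) * swapProd (List.range' (m + p + 2) (m / 2 + 1) 2)) *
        (swapProd (List.range' 1 (m / 2) 2) * Equiv.swap (m + 1) (m + p + 2) *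
          swapProd (List.range' (m + p + 3) (m / 2) 2))
  else
    if l' % 2 = 1 then
      -- case (iii)
      (swapProd (List.range' 1 ((m + 1) / 2) 2) *
          swapProd (List.range' (m + p + 2) ((m + 1) / 2) 2)) *
        (swapProd (List.range' 2 ((m - 1) / 2) 2) * Equiv.swap (m + 1) (m + p + 2) *
          swapProd (List.range' (m + p + 3) ((m - 1) / 2) 2))
    else
      -- case (iv)
      (swapProd (List.range' 1 ((m + 1) / 2) 2) *
          swapProd (List.range' (m + p + 2) ((m + 1) / 2) 2)) *
        (swapProd (List.range' 2 ((m - 1) / 2) 2) * Equiv.swap (m + 1) (m + p + 2) *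
          swapProd (List.range' (m + p + 3) ((m + 1) / 2) 2))

/-- Δ_s = {α ∈ Δ₊ : sα ∈ Δ₋}. -/
def DeltaS (l : ℕ) (s : Equiv.Perm ℕ) : Set V :=
  {v ∈ DeltaPos l | pact s v ∈ DeltaNeg l}

/-- Δ_{s⁻¹} = {α ∈ Δ₊ : s⁻¹α ∈ Δ₋}. -/
def DeltaSinv (l : ℕ) (s : Equiv.Perm ℕ) : Set V :=
  {v ∈ DeltaPos l | pact s⁻¹ v ∈ DeltaNeg l}

/-- (Δ̄_K)₊ = {α ∈ Δ₊ : sα ≠ α}. -/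
def DeltaKpos (l : ℕ) (s : Equiv.Perm ℕ) : Set V :=
  {v ∈ DeltaPos l | pact s v ≠ v}

/-- (Δ̄_K)₋ = −(Δ̄_K)₊. -/
def DeltaKneg (l : ℕ) (s : Equiv.Perm ℕ) : Set V := {v | -v ∈ DeltaKpos l s}

/-- Δ^C = {α ∈ (Δ̄_K)₊ : row(sα) = row(α)}. -/
def DeltaC (l : ℕ) (s : Equiv.Perm ℕ) : Set V :=
  {v ∈ DeltaKpos l s | rowOf (pact s v) = rowOf v}

/-- Δ^R = {α ∈ (Δ̄_K)₊ : col(sα) = col(α)}. -/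
def DeltaR (l : ℕ) (s : Equiv.Perm ℕ) : Set V :=
  {v ∈ DeltaKpos l s | colOf (pact s v) = colOf v}

/-- Δ^O = (Δ̄_K)₊ \ (Δ^C ∪ Δ^R). -/
def DeltaO (l : ℕ) (s : Equiv.Perm ℕ) : Set V :=
  DeltaKpos l s \ (DeltaC l s ∪ DeltaR l s)

/-- Δ₁^O = {α ∈ Δ^O : row(α) ≥ m+p+2}. -/
def DeltaO1 (l : ℕ) (s : Equiv.Perm ℕ) (m p : ℕ) : Set V :=
  {v ∈ DeltaO l s | m + p + 2 ≤ rowOf v}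

/-- Δ₂^O = {α ∈ Δ^O : col(α) ≤ m+1}. -/
def DeltaO2 (l : ℕ) (s : Equiv.Perm ℕ) (m : ℕ) : Set V :=
  {v ∈ DeltaO l s | colOf v ≤ m + 1}

/-- Δ₃^O = Δ^O \ (Δ₁^O ∪ Δ₂^O). -/
def DeltaO3 (l : ℕ) (s : Equiv.Perm ℕ) (m p : ℕ) : Set V :=
  DeltaO l s \ (DeltaO1 l s m p ∪ DeltaO2 l s m)

/-- Δ̄_K^k = {α ∈ (Δ̄_K)₊ : s^{−j}α ∈ (Δ̄_K)₊ for 1 ≤ j ≤ k−1 and s^{−k}α ∈ (Δ̄_K)₋}. -/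
def DeltaKk (l : ℕ) (s : Equiv.Perm ℕ) (k : ℕ) : Set V :=
  {v ∈ DeltaKpos l s |
    (∀ j, 1 ≤ j → j ≤ k - 1 → pact (s⁻¹ ^ j) v ∈ DeltaKpos l s) ∧
      pact (s⁻¹ ^ k) v ∈ DeltaKneg l s}

/-- d(α) = min{k ≥ 1 : s^{−k}α ∈ Δ₋}. -/
def dd (l : ℕ) (s : Equiv.Perm ℕ) (v : V) : ℕ :=
  sInf {k | 1 ≤ k ∧ pact (s⁻¹ ^ k) v ∈ DeltaNeg l}

/-- Δ_Z = {e_i − e_j : m+2 ≤ i, j ≤ m+p+1, i ≠ j}. -/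
def DeltaZ (m p : ℕ) : Set V :=
  {v | ∃ i j, m + 2 ≤ i ∧ i ≤ m + p + 1 ∧ m + 2 ≤ j ∧ j ≤ m + p + 1 ∧ i ≠ j ∧ v = rt i j}

/-- The ⟨s⟩-orbit of a vector. -/
def orbitOf (s : Equiv.Perm ℕ) (v : V) : Set V := {w | ∃ n : ℤ, w = pact (s ^ n) v}

/-- The set P_κ (for κ ∈ Δ̄_K^k). -/
def Pk (l : ℕ) (s : Equiv.Perm ℕ) (k : ℕ) (κ : V) : Set (V × V) :=
  {q | (∃ i, 2 ≤ i ∧ i ≤ k - 1 ∧ q.1 ∈ DeltaKk l s i) ∧ q.2 ∈ DeltaKk l s k ∧ κ = q.1 + q.2}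

/-- The set P′_κ (for κ ∈ Δ̄_K^k). -/
def Pk' (l : ℕ) (s : Equiv.Perm ℕ) (k : ℕ) (κ : V) : Set (V × V) :=
  {q | q.1 ∈ DeltaKk l s k ∧ q.2 ∈ DeltaKk l s k ∧ κ = q.1 + q.2}

/-- The eigenvector v^λ of case (i) (m even, l′ = 2m+1 odd). -/
def vlam (m p : ℕ) (lam : ℂ) : ℕ → ℂ := fun j =>
  if j = 0 then 0
  else if j ≤ m + 1 then
    (if j % 2 = 1 then lam ^ ((4 * m + 5 - j) / 2) else lam ^ (j / 2))
  else if j ≤ m + p + 1 then 0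
  else if j ≤ m + p + m + 2 then
    (if (j - (m + p)) % 2 = 0 then lam ^ ((m + (j - (m + p))) / 2)
     else lam ^ ((3 * m + 5 - (j - (m + p))) / 2))
  else 0

/-!
In case (iv), `s⁻¹` acts on `{1, …, l + 1}` as the single cycle
`1 → 3 → ⋯ → m → m+p+2 → m+p+4 → ⋯ → 2m+p+1 → 2m+p+3`
`  → 2m+p+2 → 2m+p → ⋯ → m+p+3 → m+1 → m-1 → ⋯ → 2 → 1`,
fixing `m+2, …, m+p+1`. A positive root `e_i - e_j` (`i < j`) lies in `Δ_{s⁻¹}` exactly when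
`s⁻¹` inverts the pair `(i, j)`, and the inversions of this explicit cycle are read off by comparing
the regions in which `i` and `j` lie.
-/

lemma neg_rt (a b : ℕ) : -rt a b = rt b a := by
  simp [rt]

lemma pact_rt (σ : Equiv.Perm ℕ) (a b : ℕ) : pact σ (rt a b) = rt (σ a) (σ b) := by
  funext x
  simp only [pact, rt, evec, Pi.sub_apply, Equiv.Perm.inv_eq_iff_eq]

lemma eq_and_eq_of_rt_eq_rt {a b c d : ℕ} (hcd : c ≠ d) (h : rt a b = rt c d) :
    a = c ∧ b = d := by
  have hc := congrFun h c
  have hd := congrFun h d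
  simp only [rt, evec, Pi.sub_apply, if_neg hcd, if_neg hcd.symm] at hc hd
  split_ifs at hc hd <;> grind

lemma rt_mem_DeltaNeg_iff (l a b : ℕ) : rt a b ∈ DeltaNeg l ↔ 1 ≤ b ∧ b < a ∧ a ≤ l + 1 := by
  constructor
  · rintro ⟨i, j, hi, hij, hj, h⟩
    rw [neg_rt] at h
    obtain ⟨rfl, rfl⟩ := eq_and_eq_of_rt_eq_rt hij.ne h
    exact ⟨hi, hij, hj⟩
  · rintro ⟨hb, hba, ha⟩
    exact ⟨b, a, hb, hba, ha, neg_rt a b⟩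

theorem DeltaSinv_eq_inversions (l : ℕ) (σ : Equiv.Perm ℕ)
    (hσ : ∀ j, 1 ≤ j → j ≤ l + 1 → 1 ≤ σ⁻¹ j ∧ σ⁻¹ j ≤ l + 1) :
    DeltaSinv l σ = {v | ∃ i j, 1 ≤ i ∧ i < j ∧ j ≤ l + 1 ∧ σ⁻¹ j < σ⁻¹ i ∧ v = rt i j} := by
  ext v
  constructor
  · rintro ⟨⟨i, j, hi, hij, hj, rfl⟩, hneg⟩
    rw [pact_rt, rt_mem_DeltaNeg_iff] at hneg
    exact ⟨i, j, hi, hij, hj, hneg.2.1, rfl⟩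
  · rintro ⟨i, j, hi, hij, hj, hinv, rfl⟩
    refine ⟨⟨i, j, hi, hij, hj, rfl⟩, ?_⟩
    rw [pact_rt, rt_mem_DeltaNeg_iff]
    have := hσ i hi (by omega)
    have := hσ j (by omega) hj
    omega

lemma swapProd_range'_apply (a n j : ℕ) :
    swapProd (List.range' a n 2) j =
      if a ≤ j ∧ j < a + 2 * n then (if (j - a) % 2 = 0 then j + 1 else j - 1) else j := by
  induction n generalizing a with
  | zero =>
    simp only [List.range'_zero, swapProd, List.map_nil, List.prod_nil, Equiv.Perm.one_apply]
    split_ifs <;> omega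
  | succ n ih =>
    rw [List.range'_succ]
    simp only [swapProd, List.map_cons, List.prod_cons, Equiv.Perm.mul_apply] at ih ⊢
    rw [ih (a + 2), Equiv.swap_apply_def]
    split_ifs <;> omega

section CaseIV

/-- `s⁻¹` in case (iv), where `l' = 2m + 2` and `l = 2m + p + 2`. -/
def weylSInvIV (m p j : ℕ) : ℕ :=
  if j = 2 then 1
  else if j % 2 = 1 ∧ 1 ≤ j ∧ j ≤ m - 2 then j + 2
  else if j % 2 = 0 ∧ 4 ≤ j ∧ j ≤ m + 1 then j - 2
  else if j = m then m + p + 2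
  else if m + 2 ≤ j ∧ j ≤ m + p + 1 then j
  else if j = m + p + 3 then m + 1
  else if m + p + 2 ≤ j ∧ j ≤ m + p + m + 1 ∧ (j - (m + p)) % 2 = 0 then j + 2
  else if m + p + 5 ≤ j ∧ j ≤ m + p + m + 2 ∧ (j - (m + p)) % 2 = 1 then j - 2
  else if j = m + p + m + 3 then j - 1
  else j

variable {m : ℕ} (p : ℕ)

lemma weylS_eq_of_iv (hmo : m % 2 = 1) :
    weylS (m + p + m + 2) (m + m + 2) =
      (swapProd (List.range' 1 ((m + 1) / 2) 2) *
          swapProd (List.range' (m + p + 2) ((m + 1) / 2) 2)) *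
        (swapProd (List.range' 2 ((m - 1) / 2) 2) * Equiv.swap (m + 1) (m + p + 2) *
          swapProd (List.range' (m + p + 3) ((m + 1) / 2) 2)) := by
  have hm : (m + m + 2 - 1) / 2 = m := by omega
  have hp : m + p + m + 2 - (m + m + 2) = p := by omega
  simp only [weylS, hm, hp]
  rw [if_neg (by omega), if_neg (by omega)]

lemma weylS_apply_weylSInvIV (hm3 : 3 ≤ m) (hmo : m % 2 = 1) (j : ℕ) :
    weylS (m + p + m + 2) (m + m + 2) (weylSInvIV m p j) = j := by
  rw [weylS_eq_of_iv p hmo]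
  unfold weylSInvIV
  split_ifs <;>
  simp (disch := omega) only [Equiv.Perm.mul_apply, swapProd_range'_apply,
    Equiv.swap_apply_of_ne_of_ne, Equiv.swap_apply_left, Equiv.swap_apply_right,
    if_pos, if_neg, ↓reduceIte] <;>
  omega

lemma weylS_inv_apply_of_iv (hm3 : 3 ≤ m) (hmo : m % 2 = 1) (j : ℕ) :
    (weylS (m + p + m + 2) (m + m + 2))⁻¹ j = weylSInvIV m p j := by
  rw [Equiv.Perm.inv_eq_iff_eq, weylS_apply_weylSInvIV p hm3 hmo]

lemma weylSInvIV_cases (hm3 : 3 ≤ m) (hmo : m % 2 = 1) (j : ℕ) :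
    (j = 2 ∧ weylSInvIV m p j = 1) ∨
    ((j % 2 = 1 ∧ 1 ≤ j ∧ j ≤ m - 2) ∧ weylSInvIV m p j = j + 2) ∨
    ((j % 2 = 0 ∧ 4 ≤ j ∧ j ≤ m + 1) ∧ weylSInvIV m p j = j - 2) ∨
    (j = m ∧ weylSInvIV m p j = m + p + 2) ∨
    ((m + 2 ≤ j ∧ j ≤ m + p + 1) ∧ weylSInvIV m p j = j) ∨
    (j = m + p + 3 ∧ weylSInvIV m p j = m + 1) ∨
    ((m + p + 2 ≤ j ∧ j ≤ m + p + m + 1 ∧ (j - (m + p)) % 2 = 0) ∧ weylSInvIV m p j = j + 2) ∨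
    ((m + p + 5 ≤ j ∧ j ≤ m + p + m + 2 ∧ (j - (m + p)) % 2 = 1) ∧ weylSInvIV m p j = j - 2) ∨
    (j = m + p + m + 3 ∧ weylSInvIV m p j = j - 1) ∨
    ((j = 0 ∨ m + p + m + 4 ≤ j) ∧ weylSInvIV m p j = j) := by
  unfold weylSInvIV
  split_ifs with h1 h2 h3 h4 h5 h6 h7 h8 h9
  · exact Or.inl ⟨h1, rfl⟩
  · exact Or.inr <| Or.inl ⟨h2, rfl⟩
  · exact Or.inr <| Or.inr <| Or.inl ⟨h3, rfl⟩
  · exact Or.inr <| Or.inr <| Or.inr <| Or.inl ⟨h4, rfl⟩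
  · exact Or.inr <| Or.inr <| Or.inr <| Or.inr <| Or.inl ⟨h5, rfl⟩
  · exact Or.inr <| Or.inr <| Or.inr <| Or.inr <| Or.inr <| Or.inl ⟨h6, rfl⟩
  · exact Or.inr <| Or.inr <| Or.inr <| Or.inr <| Or.inr <| Or.inr <| Or.inl ⟨h7, rfl⟩
  · exact Or.inr <| Or.inr <| Or.inr <| Or.inr <| Or.inr <| Or.inr <| Or.inr <| Or.inl ⟨h8, rfl⟩
  · exact Or.inr <| Or.inr <| Or.inr <| Or.inr <| Or.inr <| Or.inr <| Or.inr <| Or.inr <|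
      Or.inl ⟨h9, rfl⟩
  · exact Or.inr <| Or.inr <| Or.inr <| Or.inr <| Or.inr <| Or.inr <| Or.inr <| Or.inr <|
      Or.inr ⟨by omega, rfl⟩

lemma weylSInvIV_mem_Icc (hm3 : 3 ≤ m) (hmo : m % 2 = 1) {j : ℕ} (hj1 : 1 ≤ j)
    (hj : j ≤ m + p + m + 3) :
    1 ≤ weylSInvIV m p j ∧ weylSInvIV m p j ≤ m + p + m + 3 := by
  rcases weylSInvIV_cases p hm3 hmo j with h | h | h | h | h | h | h | h | h | h <;> omega

lemma weylSInvIV_lt_weylSInvIV_iff (hm3 : 3 ≤ m) (hmo : m % 2 = 1) {i j : ℕ} (hi : 1 ≤ i)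
    (hij : i < j) (hj : j ≤ m + p + m + 3) :
    weylSInvIV m p j < weylSInvIV m p i ↔
      (i % 2 = 1 ∧ i + 2 ≤ m ∧ j = i + 3) ∨
        (i = m ∧ m + 2 ≤ j ∧ j ≤ m + p + 1) ∨
        (i = m ∧ j = m + p + 3) ∨
        (m + 2 ≤ i ∧ i ≤ m + p + 2 ∧ j = m + p + 3) ∨
        (m + p + 2 ≤ i ∧ (i - (m + p)) % 2 = 0 ∧ i + 1 ≤ m + p + m ∧ j = i + 3) ∨
        (i = m + p + m + 1 ∧ j = m + p + m + 3) ∨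
        (i % 2 = 1 ∧ i ≤ m ∧ j = i + 1) ∨
        (m + p + 2 ≤ i ∧ (i - (m + p)) % 2 = 0 ∧ i ≤ m + p + m + 1 ∧ j = i + 1) := by
  constructor
  · intro
    -- In a consistent pair of regions, `j` is determined by `i` once we know whether `j = i + 1`.
    rcases weylSInvIV_cases p hm3 hmo i with hi | hi | hi | hi | hi | hi | hi | hi | hi | hi <;>
    rcases weylSInvIV_cases p hm3 hmo j with hj | hj | hj | hj | hj | hj | hj | hj | hj | hj <;>
    first
      | (exfalso; omega)
      | by_cases j = i + 1 <;> (repeat (first | (left; omega) | right)) <;> omega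
  · intro
    rcases weylSInvIV_cases p hm3 hmo i with hi | hi | hi | hi | hi | hi | hi | hi | hi | hi <;>
    rcases weylSInvIV_cases p hm3 hmo j with hj | hj | hj | hj | hj | hj | hj | hj | hj | hj <;>
    omega

end CaseIV

/-- explicit description of Δ_{s⁻¹} in case (iv) (m odd, l′ even). -/
theorem stmt6 (l l' m p : ℕ) (h5 : 5 ≤ l') (hll : l' ≤ l)
    (hm : m = (l' - 1) / 2) (hp : p = l - l')
    (hmo : m % 2 = 1) (hle : l' % 2 = 0) :
    DeltaSinv l (weylS l l') =
      {v | (∃ t, 1 ≤ t ∧ t ≤ (m - 1) / 2 ∧ v = rt (2 * t - 1) (2 * t + 2)) ∨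
        (∃ q, 1 ≤ q ∧ q ≤ p ∧ v = rt m (m + q + 1)) ∨
        v = rt m (m + p + 3) ∨
        (∃ i, m + 2 ≤ i ∧ i ≤ m + p + 2 ∧ v = rt i (m + p + 3)) ∨
        (∃ t, 1 ≤ t ∧ t ≤ (m - 1) / 2 ∧ v = rt (m + p + 2 * t) (m + p + 2 * t + 3)) ∨
        v = rt (m + p + m + 1) (m + p + m + 3) ∨
        (∃ t, 1 ≤ t ∧ t ≤ (m + 1) / 2 ∧ v = rt (2 * t - 1) (2 * t)) ∨
        (∃ t, 1 ≤ t ∧ t ≤ (m + 1) / 2 ∧ v = rt (m + p + 2 * t) (m + p + 2 * t + 1))} := by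
  have hm3 : 3 ≤ m := by omega
  obtain rfl : l' = m + m + 2 := by omega
  obtain rfl : l = m + p + m + 2 := by omega
  have hinv := weylS_inv_apply_of_iv p hm3 hmo
  rw [DeltaSinv_eq_inversions _ _ fun j hj1 hj => hinv j ▸ weylSInvIV_mem_Icc p hm3 hmo hj1 hj]
  ext v
  simp only [Set.mem_ofPred_eq, hinv, show m + p + m + 2 + 1 = m + p + m + 3 from rfl]
  constructor
  · rintro ⟨i, j, hi, hij, hj, hlt, rfl⟩
    rcases (weylSInvIV_lt_weylSInvIV_iff p hm3 hmo hi hij hj).1 hlt with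
      h | h | h | h | h | h | h | h
    · exact Or.inl ⟨(i + 1) / 2, by omega, by omega, by congr 1 <;> omega⟩
    · exact Or.inr <| Or.inl ⟨j - m - 1, by omega, by omega, by congr 1 <;> omega⟩
    · exact Or.inr <| Or.inr <| Or.inl (by congr 1 <;> omega)
    · exact Or.inr <| Or.inr <| Or.inr <| Or.inl ⟨i, by omega, by omega, by congr 1; omega⟩
    · exact Or.inr <| Or.inr <| Or.inr <| Or.inr <| Or.inl
        ⟨(i - (m + p)) / 2, by omega, by omega, by congr 1 <;> omega⟩
    · exact Or.inr <| Or.inr <| Or.inr <| Or.inr <| Or.inr <| Or.inl (by congr 1 <;> omega)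
    · exact Or.inr <| Or.inr <| Or.inr <| Or.inr <| Or.inr <| Or.inr <| Or.inl
        ⟨(i + 1) / 2, by omega, by omega, by congr 1 <;> omega⟩
    · exact Or.inr <| Or.inr <| Or.inr <| Or.inr <| Or.inr <| Or.inr <| Or.inr
        ⟨(i - (m + p)) / 2, by omega, by omega, by congr 1 <;> omega⟩
  · rintro (⟨t, _, _, rfl⟩ | ⟨q, _, _, rfl⟩ | rfl | ⟨i, _, _, rfl⟩ | ⟨t, _, _, rfl⟩ | rfl |
      ⟨t, _, _, rfl⟩ | ⟨t, _, _, rfl⟩) <;>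
      refine ⟨_, _, by omega, by omega, by omega,
        (weylSInvIV_lt_weylSInvIV_iff p hm3 hmo (by omega) (by omega) (by omega)).2 ?_, rfl⟩
    · exact Or.inl (by omega)
    · exact Or.inr <| Or.inl (by omega)
    · exact Or.inr <| Or.inr <| Or.inl (by omega)
    · exact Or.inr <| Or.inr <| Or.inr <| Or.inl (by omega)
    · exact Or.inr <| Or.inr <| Or.inr <| Or.inr <| Or.inl (by omega)
    · exact Or.inr <| Or.inr <| Or.inr <| Or.inr <| Or.inr <| Or.inl (by omega)
    · exact Or.inr <| Or.inr <| Or.inr <| Or.inr <| Or.inr <| Or.inr <| Or.inl (by omega)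
    · exact Or.inr <| Or.inr <| Or.inr <| Or.inr <| Or.inr <| Or.inr <| Or.inr (by omega)
end DPW
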